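/- arXiv:math/0607309 — 6 statements merged into one kernel-verified Lean document; each statement's English description precedes it below -/
import Mathlib

section
/- For real numbers 0 < x < y, the function β ↦ Γ(x+β)/Γ(y+β) is strictly decreasing on (0,∞). -/
/-!
Writing `b = y - x`, the Beta–Gamma relation gives `Γ(x+β)/Γ(y+β) = B(x+β, b)/Γ(b)`, and
`B(a, b) = ∫₀¹ t^(a-1) (1-t)^(b-1) dt` is strictly decreasing in `a` because `t^(a-1)` is for
every `t ∈ (0,1)`.
-/

open MeasureTheory Set

namespace Real

noncomputable def betaIntegral (a b : ℝ) : ℝ :=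
  ∫ t in (0 : ℝ)..1, t ^ (a - 1) * (1 - t) ^ (b - 1)

lemma ofReal_betaIntegrand {a b t : ℝ} (ht : t ∈ Icc (0 : ℝ) 1) :
    ((t ^ (a - 1) * (1 - t) ^ (b - 1) : ℝ) : ℂ) =
      (t : ℂ) ^ ((a : ℂ) - 1) * (1 - (t : ℂ)) ^ ((b : ℂ) - 1) := by
  rw [Complex.ofReal_mul, Complex.ofReal_cpow ht.1, Complex.ofReal_cpow (sub_nonneg.2 ht.2)]
  push_cast
  rfl

lemma intervalIntegrable_betaIntegrand {a b : ℝ} (ha : 0 < a) (hb : 0 < b) :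
    IntervalIntegrable (fun t : ℝ ↦ t ^ (a - 1) * (1 - t) ^ (b - 1)) volume 0 1 := by
  refine (Complex.betaIntegral_convergent (u := a) (v := b) (by simpa) (by simpa)).norm.congr
    fun t ht ↦ ?_
  rw [uIoc_of_le zero_le_one] at ht
  have ht' : t ∈ Icc (0 : ℝ) 1 := Ioc_subset_Icc_self ht
  rw [← ofReal_betaIntegrand ht', Complex.norm_real, Real.norm_of_nonneg]
  exact mul_nonneg (rpow_nonneg ht'.1 _) (rpow_nonneg (sub_nonneg.2 ht'.2) _)

lemma _root_.Complex.betaIntegral_ofReal (a b : ℝ) :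
    Complex.betaIntegral a b = betaIntegral a b := by
  rw [betaIntegral, ← intervalIntegral.integral_ofReal, Complex.betaIntegral]
  refine intervalIntegral.integral_congr fun t ht ↦ (ofReal_betaIntegrand ?_).symm
  rwa [uIcc_of_le zero_le_one] at ht

lemma Gamma_mul_Gamma_eq_betaIntegral {a b : ℝ} (ha : 0 < a) (hb : 0 < b) :
    Gamma a * Gamma b = Gamma (a + b) * betaIntegral a b := by
  have h := Complex.Gamma_mul_Gamma_eq_betaIntegral (s := a) (t := b) (by simpa) (by simpa)
  rw [← Complex.ofReal_add, Complex.betaIntegral_ofReal, Complex.Gamma_ofReal,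
    Complex.Gamma_ofReal, Complex.Gamma_ofReal] at h
  exact_mod_cast h

lemma betaIntegral_strictAntiOn {b : ℝ} (hb : 0 < b) :
    StrictAntiOn (fun a ↦ betaIntegral a b) (Ioi 0) := by
  intro a₁ ha₁ a₂ ha₂ h
  have hpos : ∀ t ∈ Ioo (0 : ℝ) 1,
      0 < t ^ (a₁ - 1) * (1 - t) ^ (b - 1) - t ^ (a₂ - 1) * (1 - t) ^ (b - 1) := by
    intro t ht
    rw [← sub_mul]
    exact mul_pos (sub_pos.2 (rpow_lt_rpow_of_exponent_gt ht.1 ht.2 (by linarith)))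
      (rpow_pos_of_pos (sub_pos.2 ht.2) _)
  have hi₁ := intervalIntegrable_betaIntegrand ha₁ hb
  have hi₂ := intervalIntegrable_betaIntegrand ha₂ hb
  have hdiff := intervalIntegral.intervalIntegral_pos_of_pos_on (hi₁.sub hi₂) hpos zero_lt_one
  rwa [intervalIntegral.integral_sub hi₁ hi₂, sub_pos] at hdiff

lemma Gamma_div_Gamma_add_eq_betaIntegral_div {a b : ℝ} (ha : 0 < a) (hb : 0 < b) :
    Gamma a / Gamma (a + b) = betaIntegral a b / Gamma b := by
  rw [div_eq_div_iff (Gamma_pos_of_pos (add_pos ha hb)).ne' (Gamma_pos_of_pos hb).ne',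
    Gamma_mul_Gamma_eq_betaIntegral ha hb, mul_comm]

end Real

/-- For real numbers `0 < x < y`, the function `β ↦ Γ(x+β)/Γ(y+β)` is strictly
decreasing on `(0, ∞)`. -/
theorem gamma_ratio_strictAntiOn (x y : ℝ) (hx : 0 < x) (hxy : x < y) :
    StrictAntiOn (fun β : ℝ => Real.Gamma (x + β) / Real.Gamma (y + β)) (Set.Ioi 0) := by
  have hyx : 0 < y - x := sub_pos.2 hxy
  have hratio : ∀ β ∈ Ioi (0 : ℝ), Real.Gamma (x + β) / Real.Gamma (y + β) =
      Real.betaIntegral (x + β) (y - x) / Real.Gamma (y - x) := fun β hβ ↦ by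
    rw [← Real.Gamma_div_Gamma_add_eq_betaIntegral_div (add_pos hx hβ) hyx, add_right_comm,
      add_sub_cancel]
  intro β₁ hβ₁ β₂ hβ₂ h
  simp only [hratio β₁ hβ₁, hratio β₂ hβ₂]
  refine div_lt_div_of_pos_right ?_ (Real.Gamma_pos_of_pos hyx)
  exact Real.betaIntegral_strictAntiOn hyx (add_pos hx hβ₁) (add_pos hx hβ₂) (by gcongr)
end

section
/- For every real w > 1, one has 2/(2w+1) < ψ((w+1)/2) - ψ(w/2), where ψ is the digamma function. -/
/-!
Write `D x = ψ((x+1)/2) - ψ(x/2)`. The functional equation `ψ(t+1) = ψ(t) + 1/t` gives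
`D x = D (x+2) + 2/(x(x+1))`, and `D ≥ 0` on `(0, ∞)` because `ψ` is monotone there (`log ∘ Γ` is
convex). Since `2/(2x+1) - 2/(2x+5) < 2/(x(x+1))`, iterating the recursion yields
`D x ≥ 2/(2x+1) - 2/(2x+4n+1)` for every `n`, hence `D x ≥ 2/(2x+1)` in the limit; one more
application of the strict step makes the inequality strict.
-/

/-- The digamma function `ψ = (log ∘ Γ)'`. -/
noncomputable def digamma (t : ℝ) : ℝ := deriv (fun s => Real.log (Real.Gamma s)) t

open Real Set Filter Topology

lemma differentiableAt_log_Gamma {x : ℝ} (hx : 0 < x) :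
    DifferentiableAt ℝ (fun s => Real.log (Real.Gamma s)) x := by
  have h : ∀ m : ℕ, x ≠ -m := fun m => (hx.trans_le' (neg_nonpos.mpr m.cast_nonneg)).ne'
  exact (differentiableAt_Gamma h).log (Gamma_ne_zero h)

lemma digamma_add_one {x : ℝ} (hx : 0 < x) : digamma (x + 1) = digamma x + 1 / x := by
  have hshift : (fun s => Real.log (Real.Gamma (s + 1))) =ᶠ[𝓝 x]
      fun s => Real.log s + Real.log (Real.Gamma s) := by
    filter_upwards [eventually_gt_nhds hx] with s hs
    rw [Gamma_add_one hs.ne', Real.log_mul hs.ne' (Gamma_pos_of_pos hs).ne']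
  unfold digamma
  rw [← deriv_comp_add_const, hshift.deriv_eq,
    deriv_fun_add (differentiableAt_log hx.ne') (differentiableAt_log_Gamma hx), deriv_log,
    add_comm, one_div]

lemma digamma_monotoneOn : MonotoneOn digamma (Ioi 0) := fun _ ha _ hb hab =>
  convexOn_log_Gamma.monotoneOn_deriv (fun _ hx => differentiableAt_log_Gamma hx) ha hb hab

noncomputable def digammaHalfDiff (x : ℝ) : ℝ := digamma ((x + 1) / 2) - digamma (x / 2)

lemma digammaHalfDiff_nonneg {x : ℝ} (hx : 0 < x) : 0 ≤ digammaHalfDiff x :=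
  sub_nonneg.mpr <| digamma_monotoneOn (mem_Ioi.mpr (by linarith)) (mem_Ioi.mpr (by linarith))
    (by linarith)

lemma digammaHalfDiff_eq_add_two {x : ℝ} (hx : 0 < x) :
    digammaHalfDiff x = digammaHalfDiff (x + 2) + 2 / (x * (x + 1)) := by
  have hodd := digamma_add_one (x := (x + 1) / 2) (by linarith)
  have heven := digamma_add_one (x := x / 2) (by linarith)
  rw [show (x + 1) / 2 + 1 = (x + 2 + 1) / 2 by ring] at hodd
  rw [show x / 2 + 1 = (x + 2) / 2 by ring] at heven
  rw [digammaHalfDiff, digammaHalfDiff, hodd, heven]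
  field_simp
  ring

lemma two_div_sub_two_div_lt {x : ℝ} (hx : 0 < x) :
    2 / (2 * x + 1) - 2 / (2 * x + 5) < 2 / (x * (x + 1)) := by
  rw [div_sub_div _ _ (by positivity) (by positivity),
    div_lt_div_iff₀ (by positivity) (by positivity)]
  nlinarith

lemma two_div_sub_two_div_le_digammaHalfDiff (n : ℕ) {x : ℝ} (hx : 0 < x) :
    2 / (2 * x + 1) - 2 / (2 * x + 4 * n + 1) ≤ digammaHalfDiff x := by
  induction n generalizing x with
  | zero => simpa using digammaHalfDiff_nonneg hx
  | succ n ih =>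
    have hnext := ih (x := x + 2) (by linarith)
    rw [show 2 * (x + 2) + 1 = 2 * x + 5 by ring,
      show 2 * (x + 2) + 4 * (n : ℝ) + 1 = 2 * x + 4 * ↑(n + 1) + 1 by push_cast; ring] at hnext
    linarith [digammaHalfDiff_eq_add_two hx, (two_div_sub_two_div_lt hx).le]

lemma two_div_le_digammaHalfDiff {x : ℝ} (hx : 0 < x) :
    2 / (2 * x + 1) ≤ digammaHalfDiff x := by
  have hden : Tendsto (fun n : ℕ => 2 * x + 4 * (n : ℝ) + 1) atTop atTop :=
    tendsto_atTop_add_const_right _ _ <| tendsto_atTop_add_const_left _ _ <|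
      tendsto_natCast_atTop_atTop.const_mul_atTop (by norm_num)
  have hlim : Tendsto (fun n : ℕ => 2 / (2 * x + 1) - 2 / (2 * x + 4 * (n : ℝ) + 1)) atTop
      (𝓝 (2 / (2 * x + 1))) := by
    simpa using tendsto_const_nhds.sub (tendsto_const_nhds.div_atTop hden)
  exact le_of_tendsto' hlim fun n => two_div_sub_two_div_le_digammaHalfDiff n hx

lemma two_div_lt_digammaHalfDiff {x : ℝ} (hx : 0 < x) :
    2 / (2 * x + 1) < digammaHalfDiff x := by
  have hnext := two_div_le_digammaHalfDiff (x := x + 2) (by linarith)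
  rw [show 2 * (x + 2) + 1 = 2 * x + 5 by ring] at hnext
  linarith [digammaHalfDiff_eq_add_two hx, two_div_sub_two_div_lt hx]

/-- For `w > 1`, `2/(2w+1) < ψ((w+1)/2) - ψ(w/2)`. -/
theorem digamma_half_diff_lower (w : ℝ) (hw : 1 < w) :
    2 / (2 * w + 1) < digamma ((w + 1) / 2) - digamma (w / 2) :=
  two_div_lt_digammaHalfDiff (by linarith)
end

section
/- For n a natural number with n > 1 and reals β, δ with 0 < β < n, 0 < δ < n, and n < β + δ < 2n, the convolution of Riesz potentials satisfies (|·|^{-β} * |·|^{-δ})(x) = π^{n/2}·[Γ((n-β)/2)Γ((n-δ)/2)Γ((β+δ-n)/2) / (Γ(β/2)Γ(δ/2)Γ((2n-β-δ)/2))]·|x|^{-(β+δ-n)} for all nonzero x ∈ ℝⁿ. -/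
/-!
Subordinate both kernels to Gaussians, `c ^ (-β) = Γ(β/2)⁻¹ ∫₀^∞ t^(β/2-1) e^(-c²t) dt`.
By Tonelli the convolution becomes an integral over `(t, s) ∈ (0,∞)²` of the Gaussian convolution
`∫ e^(-t‖x-y‖² - s‖y‖²) dy = (π/(t+s))^(n/2) e^(-ts‖x‖²/(t+s))`. The substitution `s = t u`
decouples the variables: the `t`-integral is a Gamma integral, which produces the power of `‖x‖`,
and the `u`-integral is the Beta integral `∫₀^∞ u^(q-1) (1+u)^(-(p+q)) du = Γ(p)Γ(q)/Γ(p+q)`.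
All integrals are lower Lebesgue integrals of nonnegative functions, so Tonelli needs no
integrability hypotheses.
-/

open MeasureTheory

section RieszConvolution

open Set Real Module
open scoped ENNReal

lemma lintegral_rpow_mul_exp_neg_mul_Ioi {a r : ℝ} (ha : 0 < a) (hr : 0 < r) :
    ∫⁻ t in Ioi (0 : ℝ), ENNReal.ofReal (t ^ (a - 1) * exp (-(r * t))) =
      ENNReal.ofReal (r ^ (-a) * Gamma a) := by
  have h := integral_rpow_mul_exp_neg_mul_Ioi ha hr
  have hint : IntegrableOn (fun t : ℝ ↦ t ^ (a - 1) * exp (-(r * t))) (Ioi 0) :=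
    .of_integral_ne_zero (by rw [h]; positivity)
  rw [← ofReal_integral_eq_lintegral_ofReal hint, h, one_div, inv_rpow hr.le, rpow_neg hr.le]
  filter_upwards [ae_restrict_mem measurableSet_Ioi] with t (ht : 0 < t)
  positivity

lemma ofReal_Gamma_mul_rpow_neg_eq_lintegral {β c : ℝ} (hβ : 0 < β) (hc : 0 < c) :
    ENNReal.ofReal (Gamma (β / 2) * c ^ (-β)) =
      ∫⁻ t in Ioi (0 : ℝ), ENNReal.ofReal (t ^ (β / 2 - 1) * exp (-(c ^ 2 * t))) := by
  rw [lintegral_rpow_mul_exp_neg_mul_Ioi (by positivity) (by positivity), ← rpow_natCast,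
    ← rpow_mul hc.le, mul_comm]
  congr 3
  push_cast
  ring

lemma ofReal_Gamma_mul_Gamma_mul_ofReal_rpow_neg_mul_rpow_neg {β δ c c' : ℝ} (hβ : 0 < β)
    (hδ : 0 < δ) (hc : 0 < c) (hc' : 0 < c') :
    ENNReal.ofReal (Gamma (β / 2) * Gamma (δ / 2)) * ENNReal.ofReal (c ^ (-β) * c' ^ (-δ)) =
      ∫⁻ t in Ioi (0 : ℝ), ∫⁻ s in Ioi (0 : ℝ),
        ENNReal.ofReal (t ^ (β / 2 - 1) * exp (-(c ^ 2 * t))) *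
          ENNReal.ofReal (s ^ (δ / 2 - 1) * exp (-(c' ^ 2 * s))) := by
  rw [← ENNReal.ofReal_mul (by positivity), mul_mul_mul_comm, ENNReal.ofReal_mul (by positivity),
    ofReal_Gamma_mul_rpow_neg_eq_lintegral hβ hc, ofReal_Gamma_mul_rpow_neg_eq_lintegral hδ hc',
    ← lintegral_mul_const'' _ (by fun_prop)]
  simp_rw [lintegral_const_mul' _ _ ENNReal.ofReal_ne_top]

lemma lintegral_Ioi_eq_ofReal_mul_lintegral_comp_mul_left {f : ℝ → ℝ≥0∞} {t : ℝ} (ht : 0 < t) :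
    ∫⁻ s in Ioi (0 : ℝ), f s = ENNReal.ofReal t * ∫⁻ u in Ioi (0 : ℝ), f (t * u) := by
  have := lintegral_image_eq_lintegral_abs_deriv_mul (measurableSet_Ioi (a := (0 : ℝ)))
    (fun u _ ↦ ((hasDerivAt_id' u).const_mul t).hasDerivWithinAt)
    (mul_right_injective₀ ht.ne').injOn f
  rw [image_mul_left_Ioi ht, mul_zero] at this
  simp only [mul_one, abs_of_pos ht] at this
  rw [this, lintegral_const_mul' _ _ ENNReal.ofReal_ne_top]

lemma lintegral_rpow_mul_one_add_rpow_neg_Ioi {p q : ℝ} (hp : 0 < p) (hq : 0 < q) :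
    ∫⁻ u in Ioi (0 : ℝ), ENNReal.ofReal (u ^ (q - 1) * (1 + u) ^ (-(p + q))) =
      ENNReal.ofReal (Gamma p * Gamma q / Gamma (p + q)) := by
  have hpq : 0 < p + q := by positivity
  rw [ENNReal.ofReal_div_of_pos (by positivity),
    ENNReal.eq_div_iff (by simpa using Gamma_pos_of_pos hpq) ENNReal.ofReal_ne_top,
    ← lintegral_const_mul' _ _ ENNReal.ofReal_ne_top]
  -- `Γ(p+q) (1+u)^(-(p+q))` is itself a Gamma integral in `r`; integrate in `u` first
  calc ∫⁻ u in Ioi (0 : ℝ), ENNReal.ofReal (Gamma (p + q)) *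
        ENNReal.ofReal (u ^ (q - 1) * (1 + u) ^ (-(p + q)))
      = ∫⁻ u in Ioi (0 : ℝ), ∫⁻ r in Ioi (0 : ℝ), ENNReal.ofReal (u ^ (q - 1)) *
          ENNReal.ofReal (r ^ (p + q - 1) * exp (-((1 + u) * r))) := by
        refine setLIntegral_congr_fun measurableSet_Ioi fun u (hu : 0 < u) ↦ ?_
        rw [lintegral_const_mul' _ _ ENNReal.ofReal_ne_top,
          lintegral_rpow_mul_exp_neg_mul_Ioi hpq (by positivity),
          ← ENNReal.ofReal_mul (by positivity), ← ENNReal.ofReal_mul (by positivity)]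
        ring_nf
    _ = ∫⁻ r in Ioi (0 : ℝ), ∫⁻ u in Ioi (0 : ℝ), ENNReal.ofReal (u ^ (q - 1)) *
          ENNReal.ofReal (r ^ (p + q - 1) * exp (-((1 + u) * r))) :=
        lintegral_lintegral_swap (by fun_prop)
    _ = ∫⁻ r in Ioi (0 : ℝ), ENNReal.ofReal (r ^ (p - 1) * exp (-(1 * r))) *
          ENNReal.ofReal (Gamma q) := by
        refine setLIntegral_congr_fun measurableSet_Ioi fun r (hr : 0 < r) ↦ ?_
        have split : ∀ u ∈ Ioi (0 : ℝ), ENNReal.ofReal (u ^ (q - 1)) *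
            ENNReal.ofReal (r ^ (p + q - 1) * exp (-((1 + u) * r))) =
            ENNReal.ofReal (r ^ (p + q - 1) * exp (-r)) *
              ENNReal.ofReal (u ^ (q - 1) * exp (-(r * u))) := fun u (hu : 0 < u) ↦ by
          rw [← ENNReal.ofReal_mul (by positivity), ← ENNReal.ofReal_mul (by positivity),
            show -((1 + u) * r) = -r + -(r * u) by ring, exp_add]
          ring_nf
        rw [setLIntegral_congr_fun measurableSet_Ioi split,
          lintegral_const_mul' _ _ ENNReal.ofReal_ne_top, lintegral_rpow_mul_exp_neg_mul_Ioi hq hr,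
          ← ENNReal.ofReal_mul (by positivity), ← ENNReal.ofReal_mul (by positivity),
          show p + q - 1 = (p - 1) + q by ring, rpow_add hr, rpow_neg hr.le]
        field_simp [(rpow_pos_of_pos hr q).ne']
    _ = ENNReal.ofReal (Gamma p * Gamma q) := by
        rw [lintegral_mul_const' _ _ ENNReal.ofReal_ne_top,
          lintegral_rpow_mul_exp_neg_mul_Ioi hp one_pos, ← ENNReal.ofReal_mul (by positivity)]
        simp

lemma lintegral_Ioi_rpow_mul_rpow_mul_exp_eq_lintegral_comp_mul_left {a b D A t : ℝ}
    (ht : 0 < t) :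
    ∫⁻ s in Ioi (0 : ℝ), ENNReal.ofReal (t ^ (a - 1) * s ^ (b - 1) *
        ((π / (t + s)) ^ D * exp (-(t * s / (t + s) * A)))) =
      ∫⁻ u in Ioi (0 : ℝ), ENNReal.ofReal (π ^ D) *
        (ENNReal.ofReal (t ^ (a + b - D - 1) * exp (-(A * u / (1 + u) * t))) *
          ENNReal.ofReal (u ^ (b - 1) * (1 + u) ^ (-D))) := by
  rw [lintegral_Ioi_eq_ofReal_mul_lintegral_comp_mul_left ht,
    ← lintegral_const_mul' _ _ ENNReal.ofReal_ne_top]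
  refine setLIntegral_congr_fun measurableSet_Ioi fun u (hu : 0 < u) ↦ ?_
  rw [← ENNReal.ofReal_mul ht.le, ← ENNReal.ofReal_mul (by positivity),
    ← ENNReal.ofReal_mul (by positivity)]
  congr 1
  have ht_pow : t ^ (a + b - D - 1) = t ^ (a - 1) * t ^ (b - 1) * t / t ^ D := by
    rw [← rpow_add ht, ← rpow_add_one ht.ne', ← rpow_sub ht]
    ring_nf
  rw [show t + t * u = t * (1 + u) by ring, mul_rpow ht.le hu.le,
    div_rpow pi_pos.le (by positivity), mul_rpow ht.le (by positivity), ht_pow,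
    rpow_neg (by positivity), show t * (t * u) / (t * (1 + u)) * A = A * u / (1 + u) * t by
      field_simp]
  field_simp

lemma lintegral_Ioi_lintegral_Ioi_rpow_mul_rpow_mul_exp {a b D A : ℝ} (hA : 0 < A)
    (hγ : 0 < a + b - D) (ha : 0 < D - a) (hb : 0 < D - b) :
    ∫⁻ t in Ioi (0 : ℝ), ∫⁻ s in Ioi (0 : ℝ),
        ENNReal.ofReal (t ^ (a - 1) * s ^ (b - 1) *
          ((π / (t + s)) ^ D * exp (-(t * s / (t + s) * A)))) =
      ENNReal.ofReal (π ^ D * (Gamma (a + b - D) * A ^ (-(a + b - D))) *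
        (Gamma (D - b) * Gamma (D - a) / Gamma (D - b + (D - a)))) := by
  set γ := a + b - D with hγdef
  calc ∫⁻ t in Ioi (0 : ℝ), ∫⁻ s in Ioi (0 : ℝ),
        ENNReal.ofReal (t ^ (a - 1) * s ^ (b - 1) *
          ((π / (t + s)) ^ D * exp (-(t * s / (t + s) * A))))
      = ∫⁻ t in Ioi (0 : ℝ), ∫⁻ u in Ioi (0 : ℝ), ENNReal.ofReal (π ^ D) *
          (ENNReal.ofReal (t ^ (γ - 1) * exp (-(A * u / (1 + u) * t))) *
            ENNReal.ofReal (u ^ (b - 1) * (1 + u) ^ (-D))) :=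
        setLIntegral_congr_fun measurableSet_Ioi fun _ ht ↦
          lintegral_Ioi_rpow_mul_rpow_mul_exp_eq_lintegral_comp_mul_left ht
    _ = ENNReal.ofReal (π ^ D) * ∫⁻ u in Ioi (0 : ℝ),
          ENNReal.ofReal ((A * u / (1 + u)) ^ (-γ) * Gamma γ) *
            ENNReal.ofReal (u ^ (b - 1) * (1 + u) ^ (-D)) := by
        rw [lintegral_lintegral_swap (by fun_prop),
          ← lintegral_const_mul' _ _ ENNReal.ofReal_ne_top]
        refine setLIntegral_congr_fun measurableSet_Ioi fun u (hu : 0 < u) ↦ ?_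
        rw [lintegral_const_mul' _ _ ENNReal.ofReal_ne_top,
          lintegral_mul_const' _ _ ENNReal.ofReal_ne_top,
          lintegral_rpow_mul_exp_neg_mul_Ioi hγ (by positivity)]
    _ = ENNReal.ofReal (π ^ D) * ∫⁻ u in Ioi (0 : ℝ), ENNReal.ofReal (Gamma γ * A ^ (-γ)) *
          ENNReal.ofReal (u ^ (D - a - 1) * (1 + u) ^ (-(D - b + (D - a)))) := by
        congr 1
        refine setLIntegral_congr_fun measurableSet_Ioi fun u (hu : 0 < u) ↦ ?_
        rw [← ENNReal.ofReal_mul (by positivity), ← ENNReal.ofReal_mul (by positivity)]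
        have hu_pow : u ^ (D - a - 1) = u ^ (-γ) * u ^ (b - 1) := by
          rw [← rpow_add hu, hγdef]
          ring_nf
        have hu_pow' : (1 + u) ^ (-(D - b + (D - a))) = (1 + u) ^ (-D) / (1 + u) ^ (-γ) := by
          rw [← rpow_sub (by positivity), hγdef]
          ring_nf
        rw [div_rpow (by positivity) (by positivity), mul_rpow hA.le hu.le, hu_pow, hu_pow']
        field_simp
    _ = _ := by
        rw [lintegral_const_mul' _ _ ENNReal.ofReal_ne_top,
          lintegral_rpow_mul_one_add_rpow_neg_Ioi hb ha, ← ENNReal.ofReal_mul (by positivity),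
          ← ENNReal.ofReal_mul (by positivity)]
        ring_nf

section InnerProductSpace

variable {V : Type*} [NormedAddCommGroup V] [InnerProductSpace ℝ V] [FiniteDimensional ℝ V]
  [MeasurableSpace V] [BorelSpace V]

lemma lintegral_exp_neg_mul_sq_norm {b : ℝ} (hb : 0 < b) :
    ∫⁻ v : V, ENNReal.ofReal (exp (-(b * ‖v‖ ^ 2))) =
      ENNReal.ofReal ((π / b) ^ (finrank ℝ V / 2 : ℝ)) := by
  have h := GaussianFourier.integral_rexp_neg_mul_sq_norm (V := V) hb
  simp only [neg_mul] at h
  rw [← h, ofReal_integral_eq_lintegral_ofReal (.of_integral_ne_zero (by rw [h]; positivity))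
    (ae_of_all _ fun _ ↦ (exp_pos _).le)]

lemma lintegral_exp_neg_mul_sq_norm_sub_add {t s : ℝ} (ht : 0 < t) (hs : 0 < s) (x : V) :
    ∫⁻ y : V, ENNReal.ofReal (exp (-(t * ‖x - y‖ ^ 2 + s * ‖y‖ ^ 2))) =
      ENNReal.ofReal ((π / (t + s)) ^ (finrank ℝ V / 2 : ℝ) *
        exp (-(t * s / (t + s) * ‖x‖ ^ 2))) := by
  have hts : 0 < t + s := by positivity
  have complete_sq (y : V) : t * ‖x - y‖ ^ 2 + s * ‖y‖ ^ 2 =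
      (t + s) * ‖y - (t / (t + s)) • x‖ ^ 2 + t * s / (t + s) * ‖x‖ ^ 2 := by
    rw [norm_sub_sq_real, norm_sub_sq_real, real_inner_smul_right, norm_smul, mul_pow,
      norm_eq_abs, sq_abs, real_inner_comm]
    field_simp
    ring
  simp_rw [complete_sq, neg_add, exp_add, ENNReal.ofReal_mul (exp_pos _).le]
  rw [lintegral_mul_const' _ _ ENNReal.ofReal_ne_top,
    lintegral_sub_right_eq_self (fun y ↦ ENNReal.ofReal (exp (-((t + s) * ‖y‖ ^ 2)))),
    lintegral_exp_neg_mul_sq_norm hts, ENNReal.ofReal_mul (by positivity)]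

lemma ofReal_Gamma_mul_Gamma_mul_lintegral_rpow_norm_sub_mul_rpow_norm [Nontrivial V] {β δ : ℝ}
    (hβ : 0 < β) (hδ : 0 < δ) (x : V) :
    ENNReal.ofReal (Gamma (β / 2) * Gamma (δ / 2)) *
        ∫⁻ y : V, ENNReal.ofReal (‖x - y‖ ^ (-β) * ‖y‖ ^ (-δ)) =
      ∫⁻ t in Ioi (0 : ℝ), ∫⁻ s in Ioi (0 : ℝ),
        ENNReal.ofReal (t ^ (β / 2 - 1) * s ^ (δ / 2 - 1) *
          ((π / (t + s)) ^ (finrank ℝ V / 2 : ℝ) *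
            exp (-(t * s / (t + s) * ‖x‖ ^ 2)))) := by
  set F : V → ℝ → ℝ → ℝ≥0∞ := fun y t s ↦
    ENNReal.ofReal (t ^ (β / 2 - 1) * exp (-(‖x - y‖ ^ 2 * t))) *
      ENNReal.ofReal (s ^ (δ / 2 - 1) * exp (-(‖y‖ ^ 2 * s)))
  have hF : Measurable fun z : (V × ℝ) × ℝ ↦ F z.1.1 z.1.2 z.2 := by fun_prop
  calc ENNReal.ofReal (Gamma (β / 2) * Gamma (δ / 2)) *
        ∫⁻ y : V, ENNReal.ofReal (‖x - y‖ ^ (-β) * ‖y‖ ^ (-δ))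
      = ∫⁻ y : V, ∫⁻ t in Ioi (0 : ℝ), ∫⁻ s in Ioi (0 : ℝ), F y t s := by
        rw [← lintegral_const_mul' _ _ ENNReal.ofReal_ne_top]
        -- only a.e.: at `y = x` and `y = 0` the junk value `0 ^ (-β) = 0` disagrees with the
        -- divergent subordination integral
        refine lintegral_congr_ae ?_
        filter_upwards [measure_singleton x |> compl_mem_ae_iff.mpr,
          measure_singleton 0 |> compl_mem_ae_iff.mpr] with y (hyx : y ≠ x) (hy : y ≠ 0)
        exact ofReal_Gamma_mul_Gamma_mul_ofReal_rpow_neg_mul_rpow_neg hβ hδ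
          (norm_pos_iff.mpr (sub_ne_zero.mpr hyx.symm)) (norm_pos_iff.mpr hy)
    _ = ∫⁻ t in Ioi (0 : ℝ), ∫⁻ s in Ioi (0 : ℝ), ∫⁻ y : V, F y t s := by
        rw [lintegral_lintegral_swap (hF.lintegral_prod_right').aemeasurable]
        refine lintegral_congr fun t ↦ ?_
        exact lintegral_lintegral_swap (by fun_prop)
    _ = _ := by
        refine setLIntegral_congr_fun measurableSet_Ioi fun t (ht : 0 < t) ↦ ?_
        refine setLIntegral_congr_fun measurableSet_Ioi fun s (hs : 0 < s) ↦ ?_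
        have merge (y : V) : F y t s = ENNReal.ofReal (t ^ (β / 2 - 1) * s ^ (δ / 2 - 1)) *
            ENNReal.ofReal (exp (-(t * ‖x - y‖ ^ 2 + s * ‖y‖ ^ 2))) := by
          simp only [F]
          rw [← ENNReal.ofReal_mul (by positivity), ← ENNReal.ofReal_mul (by positivity),
            neg_add, exp_add]
          ring_nf
        simp_rw [merge]
        rw [lintegral_const_mul' _ _ ENNReal.ofReal_ne_top,
          lintegral_exp_neg_mul_sq_norm_sub_add ht hs, ← ENNReal.ofReal_mul (by positivity)]

lemma lintegral_rpow_norm_sub_mul_rpow_norm {β δ : ℝ} (hβ0 : 0 < β)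
    (hβd : β < finrank ℝ V) (hδ0 : 0 < δ) (hδd : δ < finrank ℝ V)
    (hsum : (finrank ℝ V : ℝ) < β + δ) {x : V} (hx : x ≠ 0) :
    ∫⁻ y : V, ENNReal.ofReal (‖x - y‖ ^ (-β) * ‖y‖ ^ (-δ)) =
      ENNReal.ofReal (π ^ ((finrank ℝ V : ℝ) / 2) *
        (Gamma ((finrank ℝ V - β) / 2) * Gamma ((finrank ℝ V - δ) / 2) *
          Gamma ((β + δ - finrank ℝ V) / 2) /
        (Gamma (β / 2) * Gamma (δ / 2) * Gamma ((2 * finrank ℝ V - β - δ) / 2))) *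
        ‖x‖ ^ (-(β + δ - finrank ℝ V))) := by
  have : Nontrivial V := nontrivial_of_finrank_pos (R := ℝ) (by exact_mod_cast hβ0.trans hβd)
  set d : ℝ := (finrank ℝ V : ℝ)
  have hΓ : 0 < Gamma (β / 2) * Gamma (δ / 2) := by positivity
  have hnorm : (‖x‖ ^ 2) ^ (-(β / 2 + δ / 2 - d / 2)) = ‖x‖ ^ (-(β + δ - d)) := by
    rw [← rpow_natCast, ← rpow_mul (norm_nonneg x)]
    ring_nf
  refine (ENNReal.mul_right_inj (by simpa using hΓ) ENNReal.ofReal_ne_top).mp ?_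
  rw [ofReal_Gamma_mul_Gamma_mul_lintegral_rpow_norm_sub_mul_rpow_norm hβ0 hδ0,
    lintegral_Ioi_lintegral_Ioi_rpow_mul_rpow_mul_exp (D := d / 2) (by positivity)
      (by linarith) (by linarith) (by linarith), ← ENNReal.ofReal_mul hΓ.le, hnorm]
  congr 1
  rw [show d / 2 - δ / 2 = (d - δ) / 2 by ring, show d / 2 - β / 2 = (d - β) / 2 by ring,
    show (d - δ) / 2 + (d - β) / 2 = (2 * d - β - δ) / 2 by ring,
    show β / 2 + δ / 2 - d / 2 = (β + δ - d) / 2 by ring]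
  field_simp

theorem integral_rpow_norm_sub_mul_rpow_norm {β δ : ℝ} (hβ0 : 0 < β)
    (hβd : β < finrank ℝ V) (hδ0 : 0 < δ) (hδd : δ < finrank ℝ V)
    (hsum : (finrank ℝ V : ℝ) < β + δ) {x : V} (hx : x ≠ 0) :
    ∫ y : V, ‖x - y‖ ^ (-β) * ‖y‖ ^ (-δ) =
      π ^ ((finrank ℝ V : ℝ) / 2) *
        (Gamma ((finrank ℝ V - β) / 2) * Gamma ((finrank ℝ V - δ) / 2) *
          Gamma ((β + δ - finrank ℝ V) / 2) /
        (Gamma (β / 2) * Gamma (δ / 2) * Gamma ((2 * finrank ℝ V - β - δ) / 2))) *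
        ‖x‖ ^ (-(β + δ - finrank ℝ V)) := by
  have := Gamma_pos_of_pos (show 0 < (finrank ℝ V - β) / 2 by linarith)
  have := Gamma_pos_of_pos (show 0 < (finrank ℝ V - δ) / 2 by linarith)
  have := Gamma_pos_of_pos (show 0 < (β + δ - finrank ℝ V) / 2 by linarith)
  have := Gamma_pos_of_pos (show 0 < (2 * finrank ℝ V - β - δ) / 2 by linarith)
  rw [integral_eq_lintegral_of_nonneg_ae (ae_of_all _ fun y ↦ by positivity) (by fun_prop),
    lintegral_rpow_norm_sub_mul_rpow_norm hβ0 hβd hδ0 hδd hsum hx,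
    ENNReal.toReal_ofReal (by positivity)]

end InnerProductSpace

end RieszConvolution

theorem riesz_convolution_general (n : ℕ) (β δ : ℝ)
    (hβ0 : 0 < β) (hβn : β < n) (hδ0 : 0 < δ) (hδn : δ < n)
    (hsum1 : (n : ℝ) < β + δ)
    (x : EuclideanSpace ℝ (Fin n)) (hx : x ≠ 0) :
    ∫ y : EuclideanSpace ℝ (Fin n), ‖x - y‖ ^ (-β) * ‖y‖ ^ (-δ)
      = Real.pi ^ ((n : ℝ) / 2) *
        (Real.Gamma (((n : ℝ) - β) / 2) * Real.Gamma (((n : ℝ) - δ) / 2) *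
          Real.Gamma ((β + δ - n) / 2) /
        (Real.Gamma (β / 2) * Real.Gamma (δ / 2) *
          Real.Gamma ((2 * (n : ℝ) - β - δ) / 2))) *
        ‖x‖ ^ (-(β + δ - (n : ℝ))) := by
  have h := integral_rpow_norm_sub_mul_rpow_norm (V := EuclideanSpace ℝ (Fin n)) hβ0
    (by rwa [finrank_euclideanSpace_fin]) hδ0 (by rwa [finrank_euclideanSpace_fin])
    (by rwa [finrank_euclideanSpace_fin]) hx
  rwa [finrank_euclideanSpace_fin] at h

/-- Convolution of Riesz potentials: for `0 < β, δ < n` with `n < β + δ < 2n`,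
`(|·|^{-β} * |·|^{-δ})(x) = π^{n/2}·[Γ((n-β)/2)Γ((n-δ)/2)Γ((β+δ-n)/2) /
(Γ(β/2)Γ(δ/2)Γ((2n-β-δ)/2))]·|x|^{-(β+δ-n)}` for `x ≠ 0`. -/
theorem riesz_convolution (n : ℕ) (hn : 1 < n) (β δ : ℝ)
    (hβ0 : 0 < β) (hβn : β < n) (hδ0 : 0 < δ) (hδn : δ < n)
    (hsum1 : (n : ℝ) < β + δ) (hsum2 : β + δ < 2 * n)
    (x : EuclideanSpace ℝ (Fin n)) (hx : x ≠ 0) :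
    ∫ y : EuclideanSpace ℝ (Fin n), ‖x - y‖ ^ (-β) * ‖y‖ ^ (-δ)
      = Real.pi ^ ((n : ℝ) / 2) *
        (Real.Gamma (((n : ℝ) - β) / 2) * Real.Gamma (((n : ℝ) - δ) / 2) *
          Real.Gamma ((β + δ - n) / 2) /
        (Real.Gamma (β / 2) * Real.Gamma (δ / 2) *
          Real.Gamma ((2 * (n : ℝ) - β - δ) / 2))) *
        ‖x‖ ^ (-(β + δ - (n : ℝ))) :=
  riesz_convolution_general n β δ hβ0 hβn hδ0 hδn hsum1 x hx
end

section
/- Define F(β) = ln Γ(1/2 - β) + ln Γ(1 + β) - ln Γ(1 - β) - ln Γ(3/2 + β) + (1/2)·ln(1/4 + β²) for 0 ≤ β < 1/2. Then F(β) > 0 for all 0 < β < 1/2. -/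
/-!
By Euler's limit formula `Γ(s) = lim n^s n! / (s (s+1) ⋯ (s+n))`, two products of Gamma values
whose arguments have the same sum compare as soon as the corresponding products `∏ (s + j)`
compare termwise. For `Γ(1/2) Γ(1-β) Γ(3/2+β)` against `Γ(1/2-β) Γ(1+β) Γ(3/2)` these cubics in
`j` differ by the constant `β (β + 1/2) ≥ 0`, and `Γ(1/2) = 2 Γ(3/2)`, so
`Γ(1/2-β) Γ(1+β) ≥ 2 Γ(1-β) Γ(3/2+β)`. Hence `F(β) ≥ log 2 + ½ log(1/4 + β²) = ½ log(1 + 4β²) > 0`.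
-/

open Real Filter Finset

theorem Real.prod_GammaSeq {ι : Type*} (s : Finset ι) (a : ι → ℝ) {n : ℕ} (hn : 0 < n) :
    ∏ i ∈ s, GammaSeq (a i) n =
      (n : ℝ) ^ (∑ i ∈ s, a i) * (n.factorial : ℝ) ^ #s /
        ∏ j ∈ range (n + 1), ∏ i ∈ s, (a i + j) := by
  simp only [GammaSeq]
  rw [prod_div_distrib, prod_mul_distrib, prod_const, ← rpow_sum_of_pos (by positivity),
    Finset.prod_comm]

theorem Real.prod_Gamma_le_of_forall_prod_add_le {ι : Type*} (s : Finset ι) {a b : ι → ℝ}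
    (ha : ∀ i ∈ s, 0 < a i) (hsum : ∑ i ∈ s, a i = ∑ i ∈ s, b i)
    (hle : ∀ j : ℕ, ∏ i ∈ s, (a i + j) ≤ ∏ i ∈ s, (b i + j)) :
    ∏ i ∈ s, Gamma (b i) ≤ ∏ i ∈ s, Gamma (a i) := by
  refine le_of_tendsto_of_tendsto (tendsto_finsetProd s fun i _ => GammaSeq_tendsto_Gamma (b i))
    (tendsto_finsetProd s fun i _ => GammaSeq_tendsto_Gamma (a i))
    (eventually_atTop.2 ⟨1, fun n hn => ?_⟩)
  have hpos : ∀ j : ℕ, 0 < ∏ i ∈ s, (a i + j) := fun j =>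
    prod_pos fun i hi => add_pos_of_pos_of_nonneg (ha i hi) j.cast_nonneg
  dsimp only
  rw [prod_GammaSeq s b hn, prod_GammaSeq s a hn, hsum]
  exact div_le_div_of_nonneg_left (by positivity) (prod_pos fun j _ => hpos j)
    (prod_le_prod (fun j _ => (hpos j).le) fun j _ => hle j)

theorem two_mul_Gamma_mul_Gamma_le {β : ℝ} (h0 : 0 ≤ β) (h2 : β < 1 / 2) :
    2 * (Gamma (1 - β) * Gamma (3 / 2 + β)) ≤ Gamma (1 / 2 - β) * Gamma (1 + β) := by
  have key := prod_Gamma_le_of_forall_prod_add_le univ (a := ![1 / 2 - β, 1 + β, 3 / 2])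
    (b := ![1 / 2, 1 - β, 3 / 2 + β])
    (fun i _ => by fin_cases i <;> dsimp <;> linarith)
    (by simp only [Fin.sum_univ_three, Matrix.cons_val]; ring)
    (fun j => by
      simp only [Fin.prod_univ_three, Matrix.cons_val]
      nlinarith [mul_nonneg h0 (by linarith : (0 : ℝ) ≤ 1 / 2 + β)])
  have hΓ32 : Gamma (3 / 2) = Gamma (1 / 2) / 2 := by
    rw [show (3 / 2 : ℝ) = 1 / 2 + 1 by norm_num, Gamma_add_one (by norm_num)]; ring
  simp only [Fin.prod_univ_three, Matrix.cons_val, hΓ32] at key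
  refine le_of_mul_le_mul_left ?_ (Gamma_pos_of_pos (by norm_num : (0 : ℝ) < 1 / 2))
  linarith

/-- With `F(β) = ln Γ(1/2-β) + ln Γ(1+β) - ln Γ(1-β) - ln Γ(3/2+β)
+ (1/2)·ln(1/4+β²)`, one has `F(β) > 0` for `0 < β < 1/2`. -/
theorem logGamma_combination_pos (β : ℝ) (h0 : 0 < β) (h2 : β < 1 / 2) :
    0 < Real.log (Real.Gamma (1 / 2 - β)) + Real.log (Real.Gamma (1 + β))
        - Real.log (Real.Gamma (1 - β)) - Real.log (Real.Gamma (3 / 2 + β))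
        + (1 / 2) * Real.log (1 / 4 + β ^ 2) := by
  have hA := Gamma_pos_of_pos (by linarith : 0 < 1 / 2 - β)
  have hB := Gamma_pos_of_pos (by linarith : 0 < 1 + β)
  have hC := Gamma_pos_of_pos (by linarith : 0 < 1 - β)
  have hD := Gamma_pos_of_pos (by linarith : 0 < 3 / 2 + β)
  have hGamma : log 2 + (log (Gamma (1 - β)) + log (Gamma (3 / 2 + β))) ≤
      log (Gamma (1 / 2 - β)) + log (Gamma (1 + β)) := by
    rw [← log_mul hC.ne' hD.ne', ← log_mul two_ne_zero (by positivity), ← log_mul hA.ne' hB.ne']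
    exact log_le_log (by positivity) (two_mul_Gamma_mul_Gamma_le h0.le h2)
  have hquad : 0 < log 4 + log (1 / 4 + β ^ 2) := by
    rw [← log_mul (by norm_num) (by positivity)]
    exact log_pos (by nlinarith)
  have hlog4 : log 4 = 2 * log 2 := by
    rw [show (4 : ℝ) = 2 ^ 2 by norm_num, log_pow]; push_cast; ring
  linarith
end

section
/- For every natural number n ≥ 5, the constant D₂ = π²·max over k∈ℕ of [Γ((n+2k)/4)/Γ((n+2k+4)/4)]²·(1 + 8k/(n+2k-4)²) equals 16π²/n², i.e. the maximum is attained at k = 0. -/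
/-!
Since `Γ(x + 1) = x Γ(x)`, the `k`-th term equals `π² (4/(n+2k))² (1 + 8k/(n+2k-4)²)`.
Writing `a = n + 2k - 4`, the gap `(n+2k)² a² - n² (a² + 8k)` factors as `4k ((n+k) a² - 2n²)`,
and `(n+k) a² ≥ (n+1)(n-2)² ≥ 2n²` once `k ≥ 1` and `n ≥ 5`; so no term exceeds the one at `k = 0`.
-/

open Real

theorem Real.Gamma_div_Gamma_add_one {x : ℝ} (hx : ∀ m : ℕ, x ≠ -m) :
    Gamma x / Gamma (x + 1) = x⁻¹ := by
  have hx0 : x ≠ 0 := by simpa using hx 0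
  rw [Gamma_add_one hx0, div_mul_cancel_right₀ (Gamma_ne_zero hx)]

noncomputable def d2Term (n : ℝ) (k : ℕ) : ℝ :=
  π ^ 2 * (Gamma ((n + 2 * k) / 4) / Gamma ((n + 2 * k + 4) / 4)) ^ 2 *
    (1 + 8 * k / (n + 2 * k - 4) ^ 2)

theorem d2Term_eq {n : ℝ} (hn : 0 < n) (k : ℕ) :
    d2Term n k = π ^ 2 * (4 / (n + 2 * k)) ^ 2 * (1 + 8 * k / (n + 2 * k - 4) ^ 2) := by
  have hx : 0 < (n + 2 * k) / 4 := by positivity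
  have h4 : (n + 2 * k + 4) / 4 = (n + 2 * k) / 4 + 1 := by ring
  rw [d2Term, h4, Gamma_div_Gamma_add_one fun m => by linarith [m.cast_nonneg (α := ℝ)], inv_div]

theorem two_mul_sq_le_add_mul_sq {n k : ℝ} (hn : 5 ≤ n) (hk : 1 ≤ k) :
    2 * n ^ 2 ≤ (n + k) * (n + 2 * k - 4) ^ 2 := by
  nlinarith [sq_nonneg (n - 5), sq_nonneg (n + 2 * k - 9), mul_nonneg (sub_nonneg.2 hk) (sub_nonneg.2 hn)]

theorem sq_four_div_mul_le {n : ℝ} (hn : 5 ≤ n) (k : ℕ) :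
    (4 / (n + 2 * k)) ^ 2 * (1 + 8 * k / (n + 2 * k - 4) ^ 2) ≤ 16 / n ^ 2 := by
  have hk : (0 : ℝ) ≤ k := k.cast_nonneg
  have ha : 0 < n + 2 * k - 4 := by linarith
  have hgap : 0 ≤ (n + 2 * k) ^ 2 * (n + 2 * k - 4) ^ 2 - n ^ 2 * ((n + 2 * k - 4) ^ 2 + 8 * k) := by
    have hfactor : (n + 2 * k) ^ 2 * (n + 2 * k - 4) ^ 2 - n ^ 2 * ((n + 2 * k - 4) ^ 2 + 8 * k)
        = 4 * k * ((n + k) * (n + 2 * k - 4) ^ 2 - 2 * n ^ 2) := by ring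
    rw [hfactor]
    rcases k.eq_zero_or_pos with rfl | hk1
    · simp
    · have := two_mul_sq_le_add_mul_sq hn (Nat.one_le_cast.2 hk1)
      positivity
  rw [one_add_div (by positivity), div_pow, div_mul_div_comm,
    div_le_div_iff₀ (by positivity) (by positivity)]
  nlinarith

theorem d2Term_le {n : ℝ} (hn : 5 ≤ n) (k : ℕ) : d2Term n k ≤ 16 * π ^ 2 / n ^ 2 := by
  rw [d2Term_eq (by linarith), mul_assoc, mul_comm 16, mul_div_assoc (π ^ 2)]
  exact mul_le_mul_of_nonneg_left (sq_four_div_mul_le hn k) (sq_nonneg π)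

theorem d2Term_zero {n : ℝ} (hn : 0 < n) : d2Term n 0 = 16 * π ^ 2 / n ^ 2 := by
  rw [d2Term_eq hn]
  field_simp
  ring

/-- For `n ≥ 5`, the constant
`D₂ = π²·sup_k [Γ((n+2k)/4)/Γ((n+2k+4)/4)]²·(1+8k/(n+2k-4)²)` equals `16π²/n²`,
the supremum being attained at `k = 0`. -/
theorem D2_eq_of_five_le (n : ℕ) (hn : 5 ≤ n) :
    (⨆ k : ℕ, π ^ 2 *
        (Real.Gamma (((n : ℝ) + 2 * k) / 4) / Real.Gamma (((n : ℝ) + 2 * k + 4) / 4)) ^ 2 *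
        (1 + 8 * k / ((n : ℝ) + 2 * k - 4) ^ 2))
      = 16 * π ^ 2 / (n : ℝ) ^ 2 ∧
    π ^ 2 * (Real.Gamma (((n : ℝ) + 2 * 0) / 4) / Real.Gamma (((n : ℝ) + 2 * 0 + 4) / 4)) ^ 2 *
        (1 + 8 * 0 / ((n : ℝ) + 2 * 0 - 4) ^ 2)
      = 16 * π ^ 2 / (n : ℝ) ^ 2 := by
  have hn' : (5 : ℝ) ≤ n := by exact_mod_cast hn
  have hzero := d2Term_zero (n := n) (by linarith)
  refine ⟨?_, by simpa [d2Term] using hzero⟩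
  change ⨆ k, d2Term n k = _
  have hbdd : BddAbove (Set.range (d2Term n)) := ⟨_, Set.forall_mem_range.2 (d2Term_le hn')⟩
  exact le_antisymm (ciSup_le (d2Term_le hn')) (hzero ▸ le_ciSup hbdd 0)
end

section
/- For n > 1 and 0 < α < n, the function ψ_α(t) = ∫_{S^{n-1}} ξ₁·(t + 1/t - 2ξ₁)^{-(n-α)/2} dξ (normalized surface measure, ξ₁ the first coordinate) is positive for all t > 0, t ≠ 1. -/
open MeasureTheory

/-- The map on the unit sphere induced by a linear isometry of the ambient space. -/
noncomputable def sphereRot {n : ℕ}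
    (R : EuclideanSpace ℝ (Fin n) ≃ₗᵢ[ℝ] EuclideanSpace ℝ (Fin n))
    (ξ : Metric.sphere (0 : EuclideanSpace ℝ (Fin n)) 1) :
    Metric.sphere (0 : EuclideanSpace ℝ (Fin n)) 1 :=
  ⟨R ξ, by
    have h := ξ.2
    simp only [mem_sphere_zero_iff_norm] at h ⊢
    simp [R.norm_map, h]⟩

/-! The integrand is `f ξ = ξ₁ g(ξ₁)` with `g x = (t + 1/t - 2x) ^ (-(n - α)/2)`, which is strictly
increasing on `[-1, 1]` because `t + 1/t > 2` and the exponent is negative. As `μ` is invariant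
under `ξ ↦ -ξ`, `2 ∫ f = ∫ (f ξ + f (-ξ)) = ∫ ξ₁ (g ξ₁ - g (-ξ₁))`, an integral of a nonnegative
function that is positive where `ξ₁ ≠ 0`. The sets `{ξᵢ ≠ 0}` cover the sphere and are exchanged
by coordinate swaps, so they all have the same measure, which must be positive. -/

theorem integral_pos_of_measurePreserving_add_comp {X : Type*} [MeasurableSpace X]
    {μ : Measure X} {σ : X → X} (hσ : MeasurePreserving σ μ μ) {f : X → ℝ}
    (hf : Integrable f μ) (h_nonneg : ∀ x, 0 ≤ f x + f (σ x))
    (h_pos : 0 < μ (Function.support fun x => f x + f (σ x))) :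
    0 < ∫ x, f x ∂μ := by
  have hfσ : Integrable (fun x => f (σ x)) μ := hσ.integrable_comp_of_integrable hf
  have h_comp : ∫ x, f (σ x) ∂μ = ∫ x, f x ∂μ := by
    rw [← integral_map hσ.aemeasurable (hσ.map_eq.symm ▸ hf.aestronglyMeasurable), hσ.map_eq]
  have h_sum : 0 < ∫ x, (f x + f (σ x)) ∂μ :=
    (integral_pos_iff_support_of_nonneg h_nonneg (hf.add hfσ)).2 h_pos
  rw [integral_add hf hfσ, h_comp] at h_sum
  linarith

section OddPairing

variable {g : ℝ → ℝ} {s : Set ℝ} {x : ℝ}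

theorem mul_add_neg_mul_nonneg_of_monotoneOn (hg : MonotoneOn g s) (hx : x ∈ s) (hnx : -x ∈ s) :
    0 ≤ x * g x + -x * g (-x) := by
  rcases le_total x 0 with h | h
  · have := hg hx hnx (by linarith); nlinarith
  · have := hg hnx hx (by linarith); nlinarith

theorem mul_add_neg_mul_pos_of_strictMonoOn (hg : StrictMonoOn g s) (hx : x ∈ s) (hnx : -x ∈ s)
    (hx0 : x ≠ 0) : 0 < x * g x + -x * g (-x) := by
  rcases hx0.lt_or_gt with h | h
  · have := hg hx hnx (by linarith); nlinarith
  · have := hg hnx hx (by linarith); nlinarith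

end OddPairing

theorem strictMonoOn_sub_mul_rpow_of_neg {q : ℝ} (hq : q < 0) (c : ℝ) {b : ℝ} (hb : 0 < b) :
    StrictMonoOn (fun x : ℝ => (c - b * x) ^ q) (Set.Iio (c / b)) := by
  intro x _ y hy hxy
  have hy' : b * y < c := (lt_div_iff₀' hb).1 hy
  exact Real.rpow_lt_rpow_of_neg (by linarith) (by nlinarith) hq

theorem two_lt_add_one_div {t : ℝ} (ht : 0 < t) (ht1 : t ≠ 1) : 2 < t + 1 / t := by
  have h : t + 1 / t - 2 = (t - 1) ^ 2 / t := by field_simp; ring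
  have : 0 < (t - 1) ^ 2 / t := div_pos (sq_pos_of_ne_zero (sub_ne_zero.2 ht1)) ht
  linarith

local notation "𝕊[" n "]" => Metric.sphere (0 : EuclideanSpace ℝ (Fin n)) 1

namespace UnitSphere

variable {n : ℕ}

theorem abs_apply_le_one (ξ : 𝕊[n]) (i : Fin n) : |(ξ : EuclideanSpace ℝ (Fin n)) i| ≤ 1 := by
  simpa [← Real.norm_eq_abs] using PiLp.norm_apply_le (ξ : EuclideanSpace ℝ (Fin n)) i

theorem continuous_apply (i : Fin n) :
    Continuous fun ξ : 𝕊[n] => (ξ : EuclideanSpace ℝ (Fin n)) i :=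
  (PiLp.continuous_apply 2 _ i).comp continuous_subtype_val

theorem continuous_sphereRot (R : EuclideanSpace ℝ (Fin n) ≃ₗᵢ[ℝ] EuclideanSpace ℝ (Fin n)) :
    Continuous (sphereRot R) :=
  (R.continuous.comp continuous_subtype_val).subtype_mk _

theorem iUnion_apply_ne_zero : ⋃ i : Fin n, {ξ : 𝕊[n] | (ξ : EuclideanSpace ℝ (Fin n)) i ≠ 0} =
    Set.univ := by
  refine Set.eq_univ_of_forall fun ξ => ?_
  by_contra h
  simp only [Set.mem_iUnion, Set.mem_ofPred_eq, not_exists, not_not] at h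
  have h0 : (ξ : EuclideanSpace ℝ (Fin n)) = 0 := PiLp.ext h
  simpa [h0] using ξ.2

variable {μ : Measure 𝕊[n]}

theorem measurePreserving_sphereRot (hμ : ∀ R, μ.map (sphereRot R) = μ)
    (R : EuclideanSpace ℝ (Fin n) ≃ₗᵢ[ℝ] EuclideanSpace ℝ (Fin n)) :
    MeasurePreserving (sphereRot R) μ μ :=
  ⟨(continuous_sphereRot R).measurable, hμ R⟩

theorem measure_apply_ne_zero_eq (hμ : ∀ R, μ.map (sphereRot R) = μ) (i j : Fin n) :
    μ {ξ | (ξ : EuclideanSpace ℝ (Fin n)) i ≠ 0} =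
      μ {ξ | (ξ : EuclideanSpace ℝ (Fin n)) j ≠ 0} := by
  let R := LinearIsometryEquiv.piLpCongrLeft 2 ℝ ℝ (Equiv.swap i j)
  have hR : ∀ ξ : 𝕊[n],
      (sphereRot R ξ : EuclideanSpace ℝ (Fin n)) i = (ξ : EuclideanSpace ℝ (Fin n)) j := fun ξ => by
    simp [sphereRot, R, LinearIsometryEquiv.piLpCongrLeft_apply, Equiv.piCongrLeft'_apply]
  have hmeas : MeasurableSet {ξ : 𝕊[n] | (ξ : EuclideanSpace ℝ (Fin n)) i ≠ 0} :=
    (isClosed_eq (continuous_apply i) continuous_const).isOpen_compl.measurableSet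
  rw [← (measurePreserving_sphereRot hμ R).measure_preimage hmeas.nullMeasurableSet]
  congr 1
  ext ξ
  simp [hR]

theorem measure_apply_ne_zero_pos [NeZero μ] (hμ : ∀ R, μ.map (sphereRot R) = μ) (i : Fin n) :
    0 < μ {ξ | (ξ : EuclideanSpace ℝ (Fin n)) i ≠ 0} := by
  refine pos_iff_ne_zero.2 fun h => NeZero.ne μ ?_
  rw [← Measure.measure_univ_eq_zero, ← iUnion_apply_ne_zero]
  exact measure_iUnion_null fun j => (measure_apply_ne_zero_eq hμ j i).trans h

end UnitSphere

/-- For `n > 1` and `0 < α < n`, the function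
`ψ_α(t) = ∫_{S^{n-1}} ξ₁ (t + 1/t - 2ξ₁)^{-(n-α)/2} dξ` (with `dξ` the
rotation-invariant probability measure on `S^{n-1}`) is positive for every
`t > 0` with `t ≠ 1`. -/
theorem psi_alpha_pos (n : ℕ) (hn : 1 < n) (α : ℝ) (hαn : α < n)
    (μ : Measure (Metric.sphere (0 : EuclideanSpace ℝ (Fin n)) 1))
    [IsProbabilityMeasure μ]
    (hμ : ∀ R : EuclideanSpace ℝ (Fin n) ≃ₗᵢ[ℝ] EuclideanSpace ℝ (Fin n),
      μ.map (sphereRot R) = μ)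
    (t : ℝ) (ht : 0 < t) (ht1 : t ≠ 1) :
    0 < ∫ ξ : Metric.sphere (0 : EuclideanSpace ℝ (Fin n)) 1,
        (ξ : EuclideanSpace ℝ (Fin n)) ⟨0, by omega⟩ *
          (t + 1 / t - 2 * (ξ : EuclideanSpace ℝ (Fin n)) ⟨0, by omega⟩) ^
            (-((n : ℝ) - α) / 2) ∂μ := by
  have hq : -((n : ℝ) - α) / 2 < 0 := by linarith
  set i₀ : Fin n := ⟨0, by omega⟩
  set q : ℝ := -((n : ℝ) - α) / 2
  have hc : 2 < t + 1 / t := two_lt_add_one_div ht ht1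
  have hmono : StrictMonoOn (fun x : ℝ => (t + 1 / t - 2 * x) ^ q) (Set.Icc (-1) 1) :=
    (strictMonoOn_sub_mul_rpow_of_neg hq _ two_pos).mono fun x hx => by
      rw [Set.mem_Iio, lt_div_iff₀ two_pos]
      linarith [hx.2]
  have hmem : ∀ ξ : 𝕊[n], (ξ : EuclideanSpace ℝ (Fin n)) i₀ ∈ Set.Icc (-1) 1 ∧
      -(ξ : EuclideanSpace ℝ (Fin n)) i₀ ∈ Set.Icc (-1) 1 := fun ξ =>
    ⟨abs_le.1 (UnitSphere.abs_apply_le_one ξ i₀),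
      abs_le.1 ((abs_neg _).trans_le (UnitSphere.abs_apply_le_one ξ i₀))⟩
  have hneg : ∀ ξ : 𝕊[n], (sphereRot (.neg ℝ) ξ : EuclideanSpace ℝ (Fin n)) i₀ =
      -(ξ : EuclideanSpace ℝ (Fin n)) i₀ := fun ξ => by
    simp [sphereRot]
  refine integral_pos_of_measurePreserving_add_comp
    (UnitSphere.measurePreserving_sphereRot hμ (.neg ℝ)) ?_ (fun ξ => ?_) ?_
  · refine Continuous.integrable_of_hasCompactSupport ?_ (.of_compactSpace _)
    refine (UnitSphere.continuous_apply i₀).mul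
      ((continuous_const.sub (continuous_const.mul (UnitSphere.continuous_apply i₀))).rpow_const
        fun ξ => Or.inl ?_)
    show t + 1 / t - 2 * (ξ : EuclideanSpace ℝ (Fin n)) i₀ ≠ 0
    linarith [(hmem ξ).1.2]
  · rw [hneg]
    exact mul_add_neg_mul_nonneg_of_monotoneOn hmono.monotoneOn (hmem ξ).1 (hmem ξ).2
  · refine (UnitSphere.measure_apply_ne_zero_pos hμ i₀).trans_le (measure_mono fun ξ hξ => ?_)
    rw [Function.mem_support, hneg]
    exact (mul_add_neg_mul_pos_of_strictMonoOn hmono (hmem ξ).1 (hmem ξ).2 hξ).ne'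
end
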